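/- arXiv:2208.07295 — 2 statements merged into one kernel-verified Lean document; each statement's English description precedes it below -/
import Mathlib

section
/- Let n be even with 2 ≤ n ≤ m and let X ⊆ F_{q^m}² be an F_q-subspace of dimension n such that for every 1-dimensional F_{q^m}-subspace H of F_{q^m}², dim_{F_q}(X ∩ H) is either 0 or n/2 (so the Desarguesian spread of F_{q^m}² induces a subspread Δ_X = {X ∩ H ≠ {0}} of X). Then the induced spread Δ_X is Desarguesian: there exist a field automorphism σ of F_q and a σ-semilinear additive bijection f from X onto (F_{q^{n/2}})² (viewed as an F_q-vector space) such that {f(S) : S ∈ Δ_X} is exactly the set of 1-dimensional F_{q^{n/2}}-subspaces of (F_{q^{n/2}})². -/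
open Polynomial in
lemma aux_ranges_eq {K E : Type*} [Field K] [Fintype K] [Field E] [Fintype E]
    (g h : K →+* E) : g.range = h.range := by
  classical
  set q := Fintype.card K with hq
  have hq1 : 1 < q := Fintype.one_lt_card
  have hP : (X ^ q - X : E[X]) ≠ 0 := FiniteField.X_pow_card_sub_X_ne_zero E hq1
  have key : ∀ f : K →+* E, (f.range : Set E) = ((X ^ q - X : E[X]).roots.toFinset : Set E) := by
    intro f
    have hsub : (f.range : Set E) ⊆ ((X ^ q - X : E[X]).roots.toFinset : Set E) := by
      rintro x ⟨k, rfl⟩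
      simp only [Multiset.mem_toFinset, mem_roots, hP, Finset.mem_coe, IsRoot.def, ne_eq,
        not_false_eq_true, true_and, eval_sub, eval_pow, eval_X]
      rw [← map_pow, FiniteField.pow_card, sub_self]
    have hcard2 : ((X ^ q - X : E[X]).roots.toFinset).card ≤ q := by
      calc ((X ^ q - X : E[X]).roots.toFinset).card ≤ Multiset.card (X ^ q - X : E[X]).roots :=
            Multiset.toFinset_card_le _
        _ ≤ (X ^ q - X : E[X]).natDegree := card_roots' _
        _ = q := FiniteField.X_pow_card_sub_X_natDegree_eq E hq1
    have hcard1 : q ≤ (f.range : Set E).ncard := by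
      rw [RingHom.coe_range, ← Nat.card_coe_set_eq,
        Nat.card_range_of_injective f.injective, Nat.card_eq_fintype_card]
    have := Set.eq_of_subset_of_ncard_le hsub ?_ (Set.toFinite _)
    · exact this.symm ▸ rfl
    · calc ((X ^ q - X : E[X]).roots.toFinset : Set E).ncard
          ≤ ((X ^ q - X : E[X]).roots.toFinset).card := by
            rw [Set.ncard_coe_finset]
        _ ≤ q := hcard2
        _ ≤ _ := hcard1
  exact SetLike.ext' ((key g).trans (key h).symm)

lemma aux_exists_sigma {K E : Type*} [Field K] [Fintype K] [Field E] [Fintype E]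
    (g h : K →+* E) : ∃ σ : K ≃+* K, ∀ k, h (σ k) = g k := by
  have hr := aux_ranges_eq g h
  let ge : K ≃+* g.range := RingEquiv.ofBijective g.rangeRestrict
    ⟨fun a b hab => g.injective (congrArg Subtype.val hab), g.rangeRestrict_surjective⟩
  let he : K ≃+* h.range := RingEquiv.ofBijective h.rangeRestrict
    ⟨fun a b hab => h.injective (congrArg Subtype.val hab), h.rangeRestrict_surjective⟩
  refine ⟨ge.trans ((RingEquiv.subringCongr hr).trans he.symm), fun k => ?_⟩
  show h (he.symm (RingEquiv.subringCongr hr (ge k))) = g k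
  have h1 : ∀ s : h.range, h (he.symm s) = (s : E) := by
    intro s
    have : (he (he.symm s) : E) = h (he.symm s) := rfl
    rw [he.apply_symm_apply] at this
    exact this.symm
  rw [h1]
  rfl

set_option maxHeartbeats 2000000 in
set_option synthInstance.maxHeartbeats 400000 in
/-- Let `X ⊆ F_{q^m}²` be an `F_q`-subspace of even dimension `n = 2t`
(`2 ≤ n ≤ m`) such that every `1`-dimensional `F_{q^m}`-subspace `H` of `F_{q^m}²` meets `X`
in an `F_q`-space of dimension `0` or `t`, so that the Desarguesian spread induces a
subspread `Δ_X` of `X`. Then `Δ_X` is Desarguesian: for any field `E` with `[E : F_q] = t`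
(i.e. `E = F_{q^t} = F_{q^{n/2}}`) there are a field automorphism `σ` of `F_q` and a
`σ`-semilinear additive bijection `f : X → E²` carrying `Δ_X` exactly onto the set of
`1`-dimensional `E`-subspaces of `E²`. -/
theorem induced_subspread_is_desarguesian
    {K L E : Type*} [Field K] [Fintype K] [Field L] [Algebra K L]
    [Field E] [Fintype E] [Algebra K E]
    {n t m : ℕ} (hn : n = 2 * t) (hn2 : 2 ≤ n)
    (hm : Module.finrank K L = m) (hnm : n ≤ m)
    (hE : Module.finrank K E = t)
    (X : Submodule K (Fin 2 → L)) (hX : Module.finrank K X = n)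
    (hdich : ∀ H : Submodule L (Fin 2 → L), Module.finrank L H = 1 →
      Module.finrank K ↥(X ⊓ H.restrictScalars K) = 0 ∨
      Module.finrank K ↥(X ⊓ H.restrictScalars K) = t)
    (ΔX : Set (Submodule K (Fin 2 → L)))
    (hΔX : ΔX = {S | ∃ H : Submodule L (Fin 2 → L), Module.finrank L H = 1 ∧
      S = X ⊓ H.restrictScalars K ∧ S ≠ ⊥}) :
    ∃ (σ : K ≃+* K) (f : X →ₛₗ[(σ : K →+* K)] (Fin 2 → E)),
      Function.Bijective f ∧
      (∀ S ∈ ΔX, ∃ W : Submodule E (Fin 2 → E), Module.finrank E W = 1 ∧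
        ⇑f '' {x : X | (x : Fin 2 → L) ∈ S} = (W : Set (Fin 2 → E))) ∧
      (∀ W : Submodule E (Fin 2 → E), Module.finrank E W = 1 →
        ∃ S ∈ ΔX, ⇑f '' {x : X | (x : Fin 2 → L) ∈ S} = (W : Set (Fin 2 → E))) := by
  classical
  subst hn
  have ht1 : 1 ≤ t := by omega
  haveI : FiniteDimensional K L := FiniteDimensional.of_finrank_pos (by omega)
  haveI : Finite L := Module.finite_of_finite K
  -- a nonzero vector of X
  have hXbot : X ≠ ⊥ := by
    intro h
    rw [h, finrank_bot] at hX
    omega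
  obtain ⟨v0, hv0X, hv00⟩ := Submodule.exists_mem_ne_zero_of_ne_bot hXbot
  -- the "stabilizer line" of a vector
  set D : (Fin 2 → L) → Submodule K L := fun w =>
    X.comap ((LinearMap.toSpanSingleton L (Fin 2 → L) w).restrictScalars K) with hDdef
  have hDmem : ∀ (w : Fin 2 → L) (l : L), l ∈ D w ↔ l • w ∈ X := fun _ _ => Iff.rfl
  -- dimension of intersections
  have hXH : ∀ w : Fin 2 → L, w ∈ X → w ≠ 0 →
      Module.finrank K ↥(X ⊓ (Submodule.span L {w}).restrictScalars K) = t := by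
    intro w hwX hw0
    rcases hdich _ (finrank_span_singleton hw0) with h0 | h
    · exfalso
      have hmem : w ∈ X ⊓ (Submodule.span L {w}).restrictScalars K :=
        ⟨hwX, Submodule.mem_span_singleton_self w⟩
      have := Submodule.finrank_eq_zero.mp h0
      rw [this] at hmem
      exact hw0 hmem
    · exact h
  have hD : ∀ w : Fin 2 → L, w ∈ X → w ≠ 0 → Module.finrank K (D w) = t := by
    intro w hwX hw0
    set μ := (LinearMap.toSpanSingleton L (Fin 2 → L) w).restrictScalars K with hμ
    have hmap : (D w).map μ = X ⊓ (Submodule.span L {w}).restrictScalars K := by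
      apply le_antisymm
      · rintro _ ⟨l, hl, rfl⟩
        exact ⟨hl, Submodule.smul_mem _ _ (Submodule.mem_span_singleton_self w)⟩
      · rintro u ⟨huX, huH⟩
        obtain ⟨l, rfl⟩ := Submodule.mem_span_singleton.mp huH
        exact ⟨l, huX, rfl⟩
    have hinj : Function.Injective μ := by
      intro a b hab
      have h1 : (a - b) • w = 0 := by
        rw [sub_smul, sub_eq_zero]
        exact hab
      rcases smul_eq_zero.mp h1 with h | h
      · exact sub_eq_zero.mp h
      · exact absurd h hw0
    rw [← hXH w hwX hw0, ← hmap]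
    exact (Submodule.equivMapOfInjective μ hinj (D w)).finrank_eq
  -- choose v1 outside the line of v0
  have hv1ex : ∃ v1, v1 ∈ X ∧ v1 ∉ Submodule.span L {v0} := by
    by_contra hcon
    push_neg at hcon
    have hle : X ≤ (Submodule.span L {v0}).restrictScalars K := fun u hu => hcon u hu
    have h1 : X ⊓ (Submodule.span L {v0}).restrictScalars K = X := inf_eq_left.mpr hle
    have := hXH v0 hv0X hv00
    rw [h1, hX] at this
    omega
  obtain ⟨v1, hv1X, hv1H⟩ := hv1ex
  have hv10 : v1 ≠ 0 := fun h => hv1H (h ▸ Submodule.zero_mem _)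
  set A := D v0 with hAdef
  set B := D v1 with hBdef
  have h1A : (1 : L) ∈ A := by
    rw [hDmem, one_smul]
    exact hv0X
  have h1B : (1 : L) ∈ B := by
    rw [hDmem, one_smul]
    exact hv1X
  have hAdim : Module.finrank K A = t := hD v0 hv0X hv00
  have hBdim : Module.finrank K B = t := hD v1 hv1X hv10
  -- uniqueness of decompositions
  have huniq0 : ∀ a b : L, a • v0 + b • v1 = 0 → a = 0 ∧ b = 0 := by
    intro a b hab
    have hb : b = 0 := by
      by_contra hb
      apply hv1H
      rw [Submodule.mem_span_singleton]
      refine ⟨-(b⁻¹ * a), ?_⟩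
      have h2 : a • v0 = -(b • v1) := by
        rw [eq_neg_iff_add_eq_zero]; exact hab
      rw [neg_smul, mul_smul, h2, smul_neg, neg_neg, inv_smul_smul₀ hb]
    rw [hb, zero_smul, add_zero, smul_eq_zero] at hab
    exact ⟨hab.resolve_right hv00, hb⟩
  have huniq : ∀ a b a' b' : L, a • v0 + b • v1 = a' • v0 + b' • v1 → a = a' ∧ b = b' := by
    intro a b a' b' hh
    have h0 := huniq0 (a - a') (b - b') (by rw [sub_smul, sub_smul, sub_add_sub_comm, sub_eq_zero]; exact hh)
    exact ⟨sub_eq_zero.mp h0.1, sub_eq_zero.mp h0.2⟩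
  -- decomposition of X
  have hdecomp : ∀ u : Fin 2 → L, u ∈ X → ∃ a b : L, a ∈ A ∧ b ∈ B ∧ u = a • v0 + b • v1 := by
    intro u hu
    have hinfbot : (X ⊓ (Submodule.span L {v0}).restrictScalars K) ⊓
        (X ⊓ (Submodule.span L {v1}).restrictScalars K) = ⊥ := by
      rw [eq_bot_iff]
      rintro z ⟨⟨-, hz0⟩, ⟨-, hz1⟩⟩
      obtain ⟨a, rfl⟩ := Submodule.mem_span_singleton.mp hz0
      obtain ⟨b, hb⟩ := Submodule.mem_span_singleton.mp hz1
      have : a • v0 + (-b) • v1 = 0 := by rw [neg_smul, hb]; abel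
      rw [Submodule.mem_bot, (huniq0 _ _ this).1, zero_smul]
    have hsup : (X ⊓ (Submodule.span L {v0}).restrictScalars K) ⊔
        (X ⊓ (Submodule.span L {v1}).restrictScalars K) = X := by
      apply Submodule.eq_of_le_of_finrank_le (sup_le inf_le_left inf_le_left)
      have hrk := Submodule.finrank_sup_add_finrank_inf_eq
        (X ⊓ (Submodule.span L {v0}).restrictScalars K)
        (X ⊓ (Submodule.span L {v1}).restrictScalars K)
      rw [hinfbot, finrank_bot, add_zero, hXH v0 hv0X hv00, hXH v1 hv1X hv10] at hrk
      rw [hX, hrk]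
      omega
    rw [← hsup] at hu
    obtain ⟨p, hp, q, hq, rfl⟩ := Submodule.mem_sup.mp hu
    obtain ⟨a, ha⟩ := Submodule.mem_span_singleton.mp hp.2
    obtain ⟨b, hb⟩ := Submodule.mem_span_singleton.mp hq.2
    refine ⟨a, b, ?_, ?_, by rw [ha, hb]⟩
    · rw [hDmem, ha]; exact hp.1
    · rw [hDmem, hb]; exact hq.1
  have hcomp : ∀ (u : Fin 2 → L) (a b : L), u ∈ X → u = a • v0 + b • v1 → a ∈ A ∧ b ∈ B := by
    intro u a b hu habu
    obtain ⟨a', b', ha', hb', hu'⟩ := hdecomp u hu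
    obtain ⟨h1, h2⟩ := huniq a b a' b' (by rw [← habu, ← hu'])
    exact ⟨h1 ▸ ha', h2 ▸ hb'⟩
  -- multiplicative closure
  have hmul : ∀ a ∈ A, ∀ b ∈ B, a * b ∈ B := by
    intro a ha b hb
    have hbv : b • v1 ∈ X := (hDmem v1 b).mp hb
    set w := v0 + b • v1 with hw
    have hwX : w ∈ X := X.add_mem hv0X hbv
    have hw0 : w ≠ 0 := by
      intro hc
      have := (huniq0 1 b (by rw [← hc, hw, one_smul])).1
      exact one_ne_zero this
    have hsmulw : ∀ l : L, l • w = l • v0 + (l * b) • v1 := by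
      intro l
      rw [hw, smul_add, smul_smul]
    have hDwle : D w ≤ A := by
      intro l hl
      have hlX : l • w ∈ X := (hDmem w l).mp hl
      exact (hcomp (l • w) l (l * b) hlX (hsmulw l)).1
    have hDwA : D w = A :=
      Submodule.eq_of_le_of_finrank_eq hDwle (by rw [hD w hwX hw0, hAdim])
    have haw : a • w ∈ X := (hDmem w a).mp (hDwA ▸ ha)
    exact (hcomp (a • w) a (a * b) haw (hsmulw a)).2
  have hBA : B = A := by
    have hAB : A ≤ B := by
      intro a ha
      have := hmul a ha 1 h1B
      rwa [mul_one] at this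
    exact (Submodule.eq_of_le_of_finrank_eq hAB (by rw [hAdim, hBdim])).symm
  have hmulA : ∀ a ∈ A, ∀ b ∈ A, a * b ∈ A := by
    intro a ha b hb
    rw [← hBA]
    exact hmul a ha b (hBA.symm ▸ hb)
  -- the subalgebra A'
  set A' : Subalgebra K L := A.toSubalgebra h1A (fun x y hx hy => hmulA x hx y hy) with hA'def
  have hmemA' : ∀ {z : L}, z ∈ A → z ∈ A' := fun hz => hz
  haveI : Fintype A' := Fintype.ofFinite A'
  have hfield : IsField A' := Finite.isField_of_domain A'
  letI : Field A' := hfield.toField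
  have hAfinrank : Module.finrank K A' = t := hAdim
  have hcardA : Fintype.card A' = Fintype.card E := by
    rw [Module.card_eq_pow_finrank (K := K) (V := A'), Module.card_eq_pow_finrank (K := K) (V := E),
      hE, hAfinrank]
  set φ : A' ≃+* E := FiniteField.ringEquivOfCardEq hcardA with hφdef
  obtain ⟨σ, hσ⟩ := aux_exists_sigma (φ.toRingHom.comp (algebraMap K A')) (algebraMap K E)
  -- inverses stay in A
  have hinvA : ∀ z : L, z ∈ A → z ≠ 0 → ∀ l : L, l * z ∈ A → l ∈ A := by
    intro z hz hz0 l hlz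
    have hz0' : (⟨z, hmemA' hz⟩ : A') ≠ 0 := by
      intro hc
      exact hz0 (congrArg Subtype.val hc)
    set c : A' := (⟨z, hmemA' hz⟩ : A')⁻¹ with hc
    have hzc : z * (c : L) = 1 := congrArg Subtype.val (mul_inv_cancel₀ hz0')
    have : l = (l * z) * (c : L) := by
      rw [mul_assoc, hzc, mul_one]
    rw [this]
    exact hmulA _ hlz _ c.2
  -- D w = A for all nonzero w in X
  have hDA : ∀ w : Fin 2 → L, w ∈ X → w ≠ 0 → D w = A := by
    intro w hwX hw0
    obtain ⟨a0, b0, ha0, hb0, hwdec⟩ := hdecomp w hwX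
    refine Submodule.eq_of_le_of_finrank_eq ?_ (by rw [hD w hwX hw0, hAdim])
    intro l hl
    have hlX : l • w ∈ X := (hDmem w l).mp hl
    have hldec : l • w = (l * a0) • v0 + (l * b0) • v1 := by
      rw [hwdec, smul_add, smul_smul, smul_smul]
    obtain ⟨hla, hlb⟩ := hcomp (l • w) (l * a0) (l * b0) hlX hldec
    have h00 : a0 ≠ 0 ∨ b0 ≠ 0 := by
      by_contra hcon
      push_neg at hcon
      apply hw0
      rw [hwdec, hcon.1, hcon.2, zero_smul, zero_smul, add_zero]
    rcases h00 with h | h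
    · exact hinvA a0 ha0 h l hla
    · exact hinvA b0 (hBA ▸ hb0) h l (hBA ▸ hlb)
  have hmemA'2 : ∀ z : A', (z : L) ∈ A := fun z => z.2
  clear_value D A B A'
  -- coordinates
  choose ca cb hca hcb hcoord using fun x : X => hdecomp (x : Fin 2 → L) x.2
  have hcbA : ∀ x : X, cb x ∈ A := fun x => hBA ▸ hcb x
  set cA : X → A' := fun x => ⟨ca x, hmemA' (hca x)⟩ with hcAdef
  set cB : X → A' := fun x => ⟨cb x, hmemA' (hcbA x)⟩ with hcBdef
  -- the semilinear map
  set f : X →ₛₗ[(σ : K →+* K)] (Fin 2 → E) :=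
    { toFun := fun x => ![φ (cA x), φ (cB x)]
      map_add' := by
        intro x y
        have hkey : ca (x + y) = ca x + ca y ∧ cb (x + y) = cb x + cb y := by
          apply huniq
          rw [← hcoord (x + y), Submodule.coe_add, hcoord x, hcoord y, add_smul, add_smul]
          abel
        have h1 : cA (x + y) = cA x + cA y := Subtype.ext (by simpa using hkey.1)
        have h2 : cB (x + y) = cB x + cB y := Subtype.ext (by simpa using hkey.2)
        show ![φ (cA (x + y)), φ (cB (x + y))] = ![φ (cA x), φ (cB x)] + ![φ (cA y), φ (cB y)]
        rw [Matrix.vec2_add, h1, h2, map_add, map_add]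
      map_smul' := by
        intro k x
        have hkey : ca (k • x) = algebraMap K L k * ca x ∧
            cb (k • x) = algebraMap K L k * cb x := by
          apply huniq
          rw [← hcoord (k • x), Submodule.coe_smul, hcoord x, smul_add, mul_smul, mul_smul,
            algebraMap_smul, algebraMap_smul]
        have h1 : cA (k • x) = algebraMap K A' k * cA x := Subtype.ext (by simpa using hkey.1)
        have h2 : cB (k • x) = algebraMap K A' k * cB x := Subtype.ext (by simpa using hkey.2)
        have hφalg : φ (algebraMap K A' k) = algebraMap K E (σ k) := (hσ k).symm
        show ![φ (cA (k • x)), φ (cB (k • x))] = σ k • ![φ (cA x), φ (cB x)]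
        rw [Matrix.smul_vec2, h1, h2, map_mul, map_mul, hφalg, Algebra.smul_def,
          Algebra.smul_def]
      } with hfdef
  have hfapp : ∀ x : X, f x = ![φ (cA x), φ (cB x)] := fun _ => rfl
  have hfinj : Function.Injective f := by
    intro x y hxy
    rw [hfapp, hfapp] at hxy
    have h0 : φ (cA x) = φ (cA y) := congrFun hxy 0
    have h1 : φ (cB x) = φ (cB y) := congrFun hxy 1
    have hA0 : ca x = ca y := congrArg Subtype.val (φ.injective h0)
    have hB0 : cb x = cb y := congrArg Subtype.val (φ.injective h1)
    apply Subtype.ext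
    rw [hcoord x, hcoord y, hA0, hB0]
  have hfsurj : Function.Surjective f := by
    intro v
    set aa := φ.symm (v 0) with haa
    set bb := φ.symm (v 1) with hbb
    have huX : (aa : L) • v0 + (bb : L) • v1 ∈ X := by
      refine X.add_mem ?_ ?_
      · exact (hDmem v0 (aa : L)).mp (hAdef ▸ hmemA'2 aa)
      · exact (hDmem v1 (bb : L)).mp (hBdef ▸ (hBA ▸ hmemA'2 bb))
    set x : X := ⟨(aa : L) • v0 + (bb : L) • v1, huX⟩ with hx
    refine ⟨x, ?_⟩
    have hkey : ca x = (aa : L) ∧ cb x = (bb : L) := huniq _ _ _ _ (hcoord x).symm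
    have h1 : cA x = aa := Subtype.ext hkey.1
    have h2 : cB x = bb := Subtype.ext hkey.2
    rw [hfapp, h1, h2, haa, hbb, RingEquiv.apply_symm_apply, RingEquiv.apply_symm_apply]
    funext i
    fin_cases i <;> rfl
  -- image of an induced spread element
  have himage : ∀ (w : Fin 2 → L) (hwX : w ∈ X), w ≠ 0 →
      ⇑f '' {x : X | (x : Fin 2 → L) ∈ X ⊓ (Submodule.span L {w}).restrictScalars K} =
        (Submodule.span E {f ⟨w, hwX⟩} : Set (Fin 2 → E)) := by
    intro w hwX hw0
    set xw : X := ⟨w, hwX⟩ with hxwdef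
    ext u
    constructor
    · rintro ⟨x, hxS, rfl⟩
      obtain ⟨hxX, hxH⟩ := hxS
      obtain ⟨l, hl⟩ := Submodule.mem_span_singleton.mp hxH
      have hlD : l ∈ D w := (hDmem w l).mpr (hl ▸ x.2)
      have hlA : l ∈ A := (hDA w hwX hw0) ▸ hlD
      have hkey : ca x = l * ca xw ∧ cb x = l * cb xw := by
        apply huniq
        rw [← hcoord x, ← hl, mul_smul, mul_smul, ← smul_add, ← hcoord xw]
      rw [SetLike.mem_coe, Submodule.mem_span_singleton]
      refine ⟨φ ⟨l, hmemA' hlA⟩, ?_⟩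
      rw [hfapp x, hfapp xw, Matrix.smul_vec2, smul_eq_mul, smul_eq_mul, ← map_mul, ← map_mul,
        show (⟨l, hmemA' hlA⟩ : A') * cA xw = cA x from Subtype.ext hkey.1.symm,
        show (⟨l, hmemA' hlA⟩ : A') * cB xw = cB x from Subtype.ext hkey.2.symm]
    · intro hu
      obtain ⟨c, hc⟩ := Submodule.mem_span_singleton.mp (SetLike.mem_coe.mp hu)
      set l : A' := φ.symm c with hldef
      have hlD : (l : L) ∈ D w := hDA w hwX hw0 ▸ hmemA'2 l
      have hlwX : (l : L) • w ∈ X := (hDmem w (l : L)).mp hlD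
      refine ⟨⟨(l : L) • w, hlwX⟩, ⟨hlwX, Submodule.smul_mem _ _
        (Submodule.mem_span_singleton_self w)⟩, ?_⟩
      set x : X := ⟨(l : L) • w, hlwX⟩ with hxdef
      have hkey : ca x = (l : L) * ca xw ∧ cb x = (l : L) * cb xw := by
        apply huniq
        rw [← hcoord x, mul_smul, mul_smul, ← smul_add, ← hcoord xw]
      have hφl : φ l = c := φ.apply_symm_apply c
      rw [← hc, hfapp x, hfapp xw, Matrix.smul_vec2, smul_eq_mul, smul_eq_mul,
        show cA x = l * cA xw from Subtype.ext hkey.1,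
        show cB x = l * cB xw from Subtype.ext hkey.2, map_mul, map_mul, hφl]
  refine ⟨σ, f, ⟨hfinj, hfsurj⟩, ?_, ?_⟩
  · -- forward: spread elements map onto lines
    intro S hS
    rw [hΔX] at hS
    obtain ⟨H, hH1, rfl, hSne⟩ := hS
    obtain ⟨w, hwS, hw0⟩ := Submodule.exists_mem_ne_zero_of_ne_bot hSne
    have hwX : w ∈ X := hwS.1
    have hwH : w ∈ H := hwS.2
    have hspan : Submodule.span L {w} = H := by
      apply Submodule.eq_of_le_of_finrank_eq ((Submodule.span_singleton_le_iff_mem w H).mpr hwH)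
      rw [finrank_span_singleton hw0, hH1]
    have hf0 : f ⟨w, hwX⟩ ≠ 0 := by
      intro hc
      apply hw0
      have h1 : (⟨w, hwX⟩ : X) = 0 := hfinj (by rw [hc, map_zero])
      exact congrArg Subtype.val h1
    refine ⟨Submodule.span E {f ⟨w, hwX⟩}, finrank_span_singleton hf0, ?_⟩
    rw [← hspan]
    exact himage w hwX hw0
  · -- backward: lines come from spread elements
    intro W hW1
    have hWne : W ≠ ⊥ := by
      intro hc
      rw [hc, finrank_bot] at hW1
      omega
    obtain ⟨e, heW, he0⟩ := Submodule.exists_mem_ne_zero_of_ne_bot hWne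
    obtain ⟨x, hx⟩ := hfsurj e
    have hx0 : (x : Fin 2 → L) ≠ 0 := by
      intro hc
      apply he0
      rw [← hx, show x = 0 from Subtype.ext hc, map_zero]
    have hxX : (x : Fin 2 → L) ∈ X := x.2
    refine ⟨X ⊓ (Submodule.span L {(x : Fin 2 → L)}).restrictScalars K, ?_, ?_⟩
    · rw [hΔX]
      refine ⟨Submodule.span L {(x : Fin 2 → L)}, finrank_span_singleton hx0, rfl, ?_⟩
      intro hc
      have hmem : (x : Fin 2 → L) ∈ (⊥ : Submodule K (Fin 2 → L)) :=
        hc ▸ ⟨hxX, Submodule.mem_span_singleton_self _⟩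
      exact hx0 (Submodule.mem_bot K |>.mp hmem)
    · rw [himage (x : Fin 2 → L) hxX hx0]
      have hspanW : Submodule.span E {e} = W := by
        apply Submodule.eq_of_le_of_finrank_eq
          ((Submodule.span_singleton_le_iff_mem e W).mpr heW)
        rw [finrank_span_singleton he0, hW1]
      rw [show (⟨(x : Fin 2 → L), hxX⟩ : X) = x from Subtype.ext rfl, hx, hspanW]
end

section
/- Let C be a non-degenerate [n,k,d] rank metric code over F_{q^m}/F_q with associated q-system X ⊆ F_{q^m}^k, and suppose C is a two-weight rank metric code with nonzero rank weights d and d' (d < d'). Let N = (q^n − 1)/(q − 1) and let v₁,…,v_N ∈ X∖{0} be representatives of the N distinct classes of X∖{0} under multiplication by F_q^× (pairwise non-proportional over F_q, with every nonzero element of X an F_q^×-multiple of some vᵢ). Then the associated Hamming metric code H(C) = {(x·v₁, …, x·v_N) : x ∈ F_{q^m}^k} ⊆ F_{q^m}^N is a [(q^n−1)/(q−1), k] code over F_{q^m} in which every nonzero codeword has Hamming weight (q^n − q^{n−d})/(q − 1) or (q^n − q^{n−d'})/(q − 1), and its minimum Hamming distance is (q^n − q^{n−d})/(q − 1). Moreover,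 if d' = n (C antipodal), then the larger weight equals N, so H(C) is an antipodal two-weight Hamming metric code. -/
/-- The rank (over the base field `K`) of a vector `c ∈ L^n`. -/
noncomputable def rankWeight (K : Type*) [Field K] {L : Type*} [Field L] [Algebra K L]
    {n : ℕ} (c : Fin n → L) : ℕ :=
  Module.finrank K (Submodule.span K (Set.range c))

private lemma twr_psi_inj {K L : Type*} [Field K] [Fintype K] [Field L] [Algebra K L]
    {n k : ℕ} (G : Matrix (Fin k) (Fin n) L)
    (hnondeg : ∀ a : Fin n → K, a ≠ 0 → ∃ c ∈ Submodule.span L (Set.range fun i => G i),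
      ∑ i, c i * algebraMap K L (a i) ≠ 0) :
    Function.Injective (Fintype.linearCombination K fun j (t : Fin k) => G t j) := by
  apply LinearMap.ker_eq_bot.mp
  apply LinearMap.ker_eq_bot'.mpr
  intro a ha
  by_contra hne
  obtain ⟨c, hcC, hc0⟩ := hnondeg a hne
  let e : (Fin n → L) →ₗ[L] L :=
    { toFun := fun w => ∑ j, w j * algebraMap K L (a j)
      map_add' := fun w w' => by simp [add_mul, Finset.sum_add_distrib]
      map_smul' := fun μ w => by simp [Finset.mul_sum, mul_assoc]  }
  have hrows : ∀ i : Fin k, e (G i) = 0 := by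
    intro i
    show (∑ j, G i j * algebraMap K L (a j)) = 0
    calc ∑ j, G i j * algebraMap K L (a j)
        = (Fintype.linearCombination K fun j (t : Fin k) => G t j) a i := by
          simp [Fintype.linearCombination_apply, Finset.sum_apply, Algebra.smul_def, mul_comm]
      _ = 0 := by rw [ha]; rfl
  have hC : Submodule.span L (Set.range fun i => G i) ≤ LinearMap.ker e := by
    rw [Submodule.span_le]
    rintro w ⟨i, rfl⟩
    exact LinearMap.mem_ker.mpr (hrows i)
  exact hc0 (LinearMap.mem_ker.mp (hC hcC))

open Finset in
private lemma twr_count {K L : Type*} [Field K] [Fintype K] [Field L] [Algebra K L]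
    [DecidableEq L] {n k N : ℕ}
    (G : Matrix (Fin k) (Fin n) L) (v : Fin N → (Fin k → L))
    (hvX : ∀ i, v i ∈ Submodule.span K (Set.range fun j => fun i => G i j) ∧ v i ≠ 0)
    (hvdistinct : ∀ i j : Fin N, i ≠ j → ∀ μ : K, v i ≠ μ • v j)
    (hvcover : ∀ x ∈ Submodule.span K (Set.range fun j => fun i => G i j), x ≠ 0 →
      ∃ (i : Fin N) (μ : K), x = μ • v i)
    (hinj : Function.Injective (Fintype.linearCombination K fun j (t : Fin k) => G t j))
    (x : Fin k → L) (hx : (fun j => ∑ t, x t * G t j) ≠ (0 : Fin n → L)) :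
    hammingNorm (fun i : Fin N => ∑ t, x t * v i t) =
      (Fintype.card K ^ n - Fintype.card K ^ (n - rankWeight K fun j => ∑ t, x t * G t j)) /
        (Fintype.card K - 1) := by
  have hq1 : 1 < Fintype.card K := Fintype.one_lt_card
  set q := Fintype.card K with hqdef
  set c : Fin n → L := fun j => ∑ t, x t * G t j with hcdef
  set r := rankWeight K c with hrdef
  set ψ := Fintype.linearCombination K (fun j (t : Fin k) => G t j) with hψdef
  let I : Finset (Fin N) := Finset.univ.filter fun i => (∑ t, x t * v i t) ≠ 0
  have hIham : hammingNorm (fun i : Fin N => ∑ t, x t * v i t) = I.card := rfl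
  classical
  have halg : Function.Injective (algebraMap K L) := (algebraMap K L).injective
  have halgne : ∀ {μ : K}, μ ≠ 0 → algebraMap K L μ ≠ 0 := by
    intro μ hμ h
    exact hμ (halg (by rw [h, map_zero]))
  let Fx : (Fin k → L) →ₗ[K] L :=
    { toFun := fun w => ∑ t, x t * w t
      map_add' := fun w w' => by simp [mul_add, Finset.sum_add_distrib]
      map_smul' := fun μ w => by
        simp only [Pi.smul_apply, Algebra.smul_def, RingHom.id_apply, Finset.mul_sum]
        exact Finset.sum_congr rfl fun t _ => by ring }
  let T : (Fin n → K) →ₗ[K] L := Fx.comp ψ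
  have hψa : ∀ (a : Fin n → K) (t : Fin k), ψ a t = ∑ j, algebraMap K L (a j) * G t j := by
    intro a t
    simp [hψdef, Fintype.linearCombination_apply, Finset.sum_apply, Algebra.smul_def]
  have hT : T = Fintype.linearCombination K c := by
    apply LinearMap.ext; intro a
    show (∑ t, x t * ψ a t) = _
    rw [Fintype.linearCombination_apply]
    calc ∑ t, x t * ψ a t = ∑ t, ∑ j, x t * (algebraMap K L (a j) * G t j) := by
          exact Finset.sum_congr rfl fun t _ => by rw [hψa, Finset.mul_sum]
      _ = ∑ j, ∑ t, x t * (algebraMap K L (a j) * G t j) := Finset.sum_comm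
      _ = ∑ j, a j • c j := by
          refine Finset.sum_congr rfl fun j _ => ?_
          rw [Algebra.smul_def, hcdef, Finset.mul_sum]
          exact Finset.sum_congr rfl fun t _ => by ring
  have hrange : Module.finrank K (LinearMap.range T) = r := by
    rw [hT, Fintype.range_linearCombination]; rfl
  have hrankn : r + Module.finrank K (LinearMap.ker T) = n := by
    have h := LinearMap.finrank_range_add_finrank_ker T
    rwa [hrange, Module.finrank_fin_fun] at h
  have hrn : r ≤ n := Nat.le.intro hrankn
  have hkerrank : Module.finrank K (LinearMap.ker T) = n - r := by omega
  have hkercard : Fintype.card ↥(LinearMap.ker T) = q ^ (n - r) := by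
    rw [Module.card_eq_pow_finrank (K := K), hkerrank]
  let A' : Finset (Fin n → K) := Finset.univ.filter fun a => T a ≠ 0
  have hZcard : (Finset.univ.filter fun a : Fin n → K => T a = 0).card = q ^ (n - r) := by
    rw [← hkercard, Fintype.card_subtype]
    exact congrArg Finset.card (Finset.filter_congr fun a _ => by simp [LinearMap.mem_ker])
  have hA' : A'.card = q ^ n - q ^ (n - r) := by
    have htot := Finset.card_filter_add_card_filter_not
      (s := (Finset.univ : Finset (Fin n → K))) (p := fun a => T a = 0)
    have huniv : (Finset.univ : Finset (Fin n → K)).card = q ^ n := by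
      simp [Finset.card_univ, hqdef]
    have hle : q ^ (n - r) ≤ q ^ n := Nat.pow_le_pow_right (by omega) (by omega)
    have : (Finset.univ.filter fun a : Fin n → K => T a = 0).card + A'.card = q ^ n := by
      rw [← huniv, ← htot]
    omega
  -- choose preimages of the v i
  have hcol : ∀ i, ∃ a, ψ a = v i := by
    intro i
    have : v i ∈ LinearMap.range ψ := by
      rw [hψdef, Fintype.range_linearCombination]
      exact (hvX i).1
    exact this
  choose u hu using hcol
  have hTu : ∀ i, T (u i) = ∑ t, x t * v i t := by
    intro i
    show Fx (ψ (u i)) = _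
    rw [hu]; rfl
  have hTψ : ∀ a, T a = Fx (ψ a) := fun a => rfl
  -- the key bijection
  have key : (I ×ˢ ((Finset.univ : Finset K).erase 0)).card = A'.card := by
    apply Finset.card_bij (fun p _ => p.2 • u p.1)
    · rintro ⟨i, μ⟩ hp
      simp only [Finset.mem_product, Finset.mem_filter, Finset.mem_erase, Finset.mem_univ,
        true_and, and_true, I] at hp
      obtain ⟨hi, hμ⟩ := hp
      simp only [Finset.mem_filter, Finset.mem_univ, true_and, A']
      rw [map_smul, hTu, Algebra.smul_def]
      exact mul_ne_zero (halgne hμ) hi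
    · rintro ⟨i, μ⟩ hp ⟨i', μ'⟩ hp' heq
      simp only [Finset.mem_product, Finset.mem_filter, Finset.mem_erase, Finset.mem_univ,
        true_and, and_true, I] at hp hp'
      obtain ⟨hi, hμ⟩ := hp
      obtain ⟨hi', hμ'⟩ := hp'
      have hv : μ • v i = μ' • v i' := by
        have h2 := congrArg ψ heq
        rwa [map_smul, map_smul, hu, hu] at h2
      have hii : i = i' := by
        by_contra hne
        refine hvdistinct i i' hne (μ⁻¹ * μ') ?_
        calc v i = μ⁻¹ • (μ • v i) := by rw [smul_smul, inv_mul_cancel₀ hμ, one_smul]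
          _ = μ⁻¹ • (μ' • v i') := by rw [hv]
          _ = (μ⁻¹ * μ') • v i' := smul_smul _ _ _
      subst hii
      have hμμ : μ = μ' := by
        have h2 : (μ - μ') • v i = 0 := by rw [sub_smul, hv, sub_self]
        by_contra hne
        obtain ⟨t, ht⟩ := Function.ne_iff.mp (hvX i).2
        have h3 := congrFun h2 t
        simp only [Pi.smul_apply, Pi.zero_apply, Algebra.smul_def] at h3
        rcases mul_eq_zero.mp h3 with h4 | h4
        · exact hne (sub_eq_zero.mp (halg (by rw [h4, map_zero])))
        · exact ht (by simpa using h4)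
      simp [hμμ]
    · intro a ha
      simp only [Finset.mem_filter, Finset.mem_univ, true_and, A'] at ha
      have hψa0 : ψ a ≠ 0 := by
        intro h
        exact ha (by rw [hTψ, h, map_zero])
      have hψaX : ψ a ∈ Submodule.span K (Set.range fun j => fun i => G i j) := by
        have : ψ a ∈ LinearMap.range ψ := ⟨a, rfl⟩
        rwa [hψdef, Fintype.range_linearCombination] at this
      obtain ⟨i, μ, hiμ⟩ := hvcover _ hψaX hψa0
      have ha_eq : a = μ • u i := by
        apply hinj
        show ψ a = ψ (μ • u i)
        rw [map_smul, hu, ← hiμ]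
      have hμ0 : μ ≠ 0 := by
        rintro rfl
        apply ha
        rw [ha_eq]
        simp
      have hi : (∑ t, x t * v i t) ≠ 0 := by
        intro h0
        apply ha
        rw [ha_eq, map_smul, hTu, h0, smul_zero]
      exact ⟨⟨i, μ⟩, by
        simp only [Finset.mem_product, Finset.mem_filter, Finset.mem_erase, Finset.mem_univ,
          true_and, and_true, I]
        exact ⟨hi, hμ0⟩, ha_eq.symm⟩
  have hprod : (I ×ˢ ((Finset.univ : Finset K).erase 0)).card = I.card * (q - 1) := by
    rw [Finset.card_product, Finset.card_erase_of_mem (Finset.mem_univ 0), Finset.card_univ]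
  rw [hIham]
  refine (Nat.div_eq_of_eq_mul_left (by omega) ?_).symm
  rw [← hA', ← key, hprod]

/-- From a non-degenerate two-weight `[n,k,d]` rank metric code `C` over
`F_{q^m}/F_q` with weights `d < d'` and `q`-system `X`, choosing representatives `v₁,…,v_N`
(`N = (q^n-1)/(q-1)`) of the `F_q^×`-classes of `X∖{0}`, the associated Hamming metric code
`H(C) = {(x·v₁,…,x·v_N) : x ∈ F_{q^m}^k}` is an `[(q^n-1)/(q-1), k]` two-weight Hamming
metric code over `F_{q^m}` with weights `(q^n - q^{n-d})/(q-1)` and `(q^n - q^{n-d'})/(q-1)`,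
with minimum distance the former; if moreover `d' = n` then the larger weight equals `N`,
so `H(C)` is antipodal. -/
theorem two_weight_hamming_from_two_weight_rank
    {K L : Type*} [Field K] [Fintype K] [Field L] [Algebra K L] [DecidableEq L]
    {n k d d' N : ℕ} (hdd' : d < d')
    (C : Submodule L (Fin n → L)) (hdim : Module.finrank L C = k)
    (G : Matrix (Fin k) (Fin n) L)
    (hG : C = Submodule.span L (Set.range fun i => G i))
    (hnondeg : ∀ a : Fin n → K, a ≠ 0 → ∃ c ∈ C, ∑ i, c i * algebraMap K L (a i) ≠ 0)
    (X : Submodule K (Fin k → L))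
    (hX : X = Submodule.span K (Set.range fun j => fun i => G i j))
    (htw : ∀ c ∈ C, c ≠ 0 → rankWeight K c = d ∨ rankWeight K c = d')
    (hdex : ∃ c ∈ C, c ≠ 0 ∧ rankWeight K c = d)
    (hd'ex : ∃ c ∈ C, c ≠ 0 ∧ rankWeight K c = d')
    (hN : N = (Fintype.card K ^ n - 1) / (Fintype.card K - 1))
    (v : Fin N → (Fin k → L))
    (hvX : ∀ i, v i ∈ X ∧ v i ≠ 0)
    (hvdistinct : ∀ i j : Fin N, i ≠ j → ∀ μ : K, v i ≠ μ • v j)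
    (hvcover : ∀ x ∈ X, x ≠ 0 → ∃ (i : Fin N) (μ : K), x = μ • v i) :
    ∃ D : Submodule L (Fin N → L),
      (D : Set (Fin N → L)) =
        Set.range (fun x : Fin k → L => fun i : Fin N => ∑ t, x t * v i t) ∧
      Module.finrank L D = k ∧
      (∀ c ∈ D, c ≠ 0 →
        hammingNorm c = (Fintype.card K ^ n - Fintype.card K ^ (n - d)) / (Fintype.card K - 1) ∨
        hammingNorm c = (Fintype.card K ^ n - Fintype.card K ^ (n - d')) / (Fintype.card K - 1)) ∧
      (∀ c ∈ D, c ≠ 0 →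
        (Fintype.card K ^ n - Fintype.card K ^ (n - d)) / (Fintype.card K - 1) ≤ hammingNorm c) ∧
      (∃ c ∈ D, c ≠ 0 ∧
        hammingNorm c = (Fintype.card K ^ n - Fintype.card K ^ (n - d)) / (Fintype.card K - 1)) ∧
      (d' = n →
        (Fintype.card K ^ n - Fintype.card K ^ (n - d')) / (Fintype.card K - 1) = N) := by
  subst hG
  subst hX
  have hq1 : 1 < Fintype.card K := Fintype.one_lt_card
  have hinjψ := twr_psi_inj G hnondeg
  let φ : (Fin k → L) →ₗ[L] (Fin N → L) :=
    { toFun := fun x i => ∑ t, x t * v i t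
      map_add' := fun a b => by
        funext i
        simp [add_mul, Finset.sum_add_distrib]
      map_smul' := fun μ a => by
        funext i
        simp [Finset.mul_sum, mul_assoc] }
  -- φ y = 0 iff the codeword vanishes
  have hker1 : ∀ y : Fin k → L, φ y = 0 → (fun j => ∑ t, y t * G t j) = (0 : Fin n → L) := by
    intro y hy
    funext j
    have hcol : (fun t : Fin k => G t j) ∈
        Submodule.span K (Set.range fun j => fun i => G i j) :=
      Submodule.subset_span ⟨j, rfl⟩
    show (∑ t, y t * G t j) = 0
    by_cases h0 : (fun t : Fin k => G t j) = 0
    · have hz : ∀ t, G t j = 0 := fun t => congrFun h0 t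
      simp [hz]
    · obtain ⟨i, μ, hiμ⟩ := hvcover _ hcol h0
      have h1 : (∑ t, y t * v i t) = 0 := by
        have h := congrFun hy i
        simp only [Pi.zero_apply] at h
        exact h
      have h2 : (∑ t, y t * G t j) = algebraMap K L μ * ∑ t, y t * v i t := by
        rw [Finset.mul_sum]
        refine Finset.sum_congr rfl fun t _ => ?_
        have h3 := congrFun hiμ t
        simp only [Pi.smul_apply, Algebra.smul_def] at h3
        rw [h3]; ring
      rw [h2, h1, mul_zero]
  have hker2 : ∀ y : Fin k → L, (fun j => ∑ t, y t * G t j) = (0 : Fin n → L) → φ y = 0 := by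
    intro y hy
    let Fy : (Fin k → L) →ₗ[K] L :=
      { toFun := fun w => ∑ t, y t * w t
        map_add' := fun w w' => by simp [mul_add, Finset.sum_add_distrib]
        map_smul' := fun μ w => by
          simp only [Pi.smul_apply, Algebra.smul_def, RingHom.id_apply, Finset.mul_sum]
          exact Finset.sum_congr rfl fun t _ => by ring }
    have hcols : ∀ j : Fin n, Fy (fun t => G t j) = 0 := by
      intro j
      have h := congrFun hy j
      simp only [Pi.zero_apply] at h
      exact h
    have hspan : Submodule.span K (Set.range fun j => fun i => G i j) ≤ LinearMap.ker Fy := by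
      rw [Submodule.span_le]
      rintro w ⟨j, rfl⟩
      exact LinearMap.mem_ker.mpr (hcols j)
    funext i
    have h := LinearMap.mem_ker.mp (hspan (hvX i).1)
    simp only [Pi.zero_apply]
    exact h
  -- rows of G are linearly independent
  have hli : LinearIndependent L (fun i : Fin k => G i) := by
    rw [linearIndependent_iff_card_eq_finrank_span, Fintype.card_fin]
    exact hdim.symm
  have hφinj : Function.Injective φ := by
    apply LinearMap.ker_eq_bot.mp
    apply LinearMap.ker_eq_bot'.mpr
    intro y hy
    have hsum : ∑ i, y i • G i = 0 := by
      funext j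
      have h := congrFun (hker1 y hy) j
      simp only [Pi.zero_apply] at h ⊢
      rw [Finset.sum_apply]
      simpa using h
    funext t
    exact Fintype.linearIndependent_iff.mp hli y hsum t
  -- membership of codewords in C
  have hmemC : ∀ y : Fin k → L,
      (fun j => ∑ t, y t * G t j) ∈ Submodule.span L (Set.range fun i => G i) := by
    intro y
    have h : (fun j => ∑ t, y t * G t j) = ∑ i, y i • G i := by
      funext j
      rw [Finset.sum_apply]
      simp
    rw [h]
    exact Submodule.sum_mem _ fun i _ =>
      Submodule.smul_mem _ _ (Submodule.subset_span ⟨i, rfl⟩)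
  have main : ∀ y : Fin k → L, φ y ≠ 0 →
      hammingNorm (φ y) =
        (Fintype.card K ^ n - Fintype.card K ^ (n - d)) / (Fintype.card K - 1) ∨
      hammingNorm (φ y) =
        (Fintype.card K ^ n - Fintype.card K ^ (n - d')) / (Fintype.card K - 1) := by
    intro y hy0
    have hcw : (fun j => ∑ t, y t * G t j) ≠ (0 : Fin n → L) := fun h => hy0 (hker2 y h)
    have hcount := twr_count G v hvX hvdistinct hvcover hinjψ y hcw
    rcases htw _ (hmemC y) hcw with h | h
    · left; rw [h] at hcount; exact hcount
    · right; rw [h] at hcount; exact hcount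
  have hwle : (Fintype.card K ^ n - Fintype.card K ^ (n - d)) / (Fintype.card K - 1) ≤
      (Fintype.card K ^ n - Fintype.card K ^ (n - d')) / (Fintype.card K - 1) := by
    apply Nat.div_le_div_right
    apply Nat.sub_le_sub_left
    exact Nat.pow_le_pow_right (by omega) (Nat.sub_le_sub_left hdd'.le n)
  refine ⟨LinearMap.range φ, LinearMap.coe_range φ, ?_, ?_, ?_, ?_, ?_⟩
  · rw [LinearMap.finrank_range_of_inj hφinj]
    exact Module.finrank_fin_fun L
  · rintro c ⟨y, rfl⟩ hc0
    exact main y hc0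
  · rintro c ⟨y, rfl⟩ hc0
    rcases main y hc0 with h | h
    · exact h.ge
    · rw [h]; exact hwle
  · obtain ⟨c, hcC, hc0, hcd⟩ := hdex
    obtain ⟨y, hy⟩ := (Submodule.mem_span_range_iff_exists_fun L).mp hcC
    have hcw_eq : (fun j => ∑ t, y t * G t j) = c := by
      funext j
      rw [← hy, Finset.sum_apply]
      simp
    have hcw0 : (fun j => ∑ t, y t * G t j) ≠ (0 : Fin n → L) := by
      rw [hcw_eq]; exact hc0
    refine ⟨φ y, LinearMap.mem_range_self φ y, fun h => hcw0 (hker1 y h), ?_⟩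
    have hcount := twr_count G v hvX hvdistinct hvcover hinjψ y hcw0
    rw [hcw_eq, hcd] at hcount
    exact hcount
  · intro h
    subst h
    rw [Nat.sub_self, pow_zero]
    exact hN.symm
end
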